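/- arXiv:2512.17884 — 2 statements merged into one kernel-verified Lean document; each statement's English description precedes it below -/
import Mathlib

section
/- Let d, m be positive integers, let κ > 0 and η ∈ (0,1), and let x₁,…,x_m ∈ ℝ^d satisfy ‖x_j − x_{j'}‖₂ ≥ κ for all j ≠ j'. Let ω be a random vector in ℝ^d whose characteristic function φ(t) = E[exp(i⟨ω, t⟩)] is real-valued, satisfies φ(t) ≥ 0 for all t, and satisfies φ(t) ≤ η/m for all t with ‖t‖₂ ≥ κ. For each realization of ω, define W ∈ ℂ^m by W_j = exp(i⟨ω, x_j⟩) and set Y = W W* − E[W W*] (expectation taken entrywise). Then almost surely ‖Y‖₂ ≤ m + η. -/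
open Matrix MeasureTheory
open scoped Matrix.Norms.L2Operator RealInnerProductSpace

/-!
Since `(W W*)ⱼₖ = exp(i⟨ω, xⱼ - xₖ⟩)` and `E[W W*]ⱼₖ = φ(xⱼ - xₖ)`, `Y` vanishes on the
diagonal (`φ(0) = 1`) and, by separation, its off-diagonal entries have modulus at most
`1 + η/m`. The operator norm is at most the Frobenius norm, hence at most `m (1 + η/m) = m + η`.
-/

lemma norm_sum_mul_sq_le {𝕜 n : Type*} [RCLike 𝕜] [Fintype n] (a v : n → 𝕜) :
    ‖∑ j, a j * v j‖ ^ 2 ≤ (∑ j, ‖a j‖ ^ 2) * ∑ j, ‖v j‖ ^ 2 :=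
  calc ‖∑ j, a j * v j‖ ^ 2 ≤ (∑ j, ‖a j‖ * ‖v j‖) ^ 2 := by
        gcongr
        exact (norm_sum_le _ _).trans_eq (by simp_rw [norm_mul])
    _ ≤ (∑ j, ‖a j‖ ^ 2) * ∑ j, ‖v j‖ ^ 2 := Finset.sum_mul_sq_le_sq_mul_sq _ _ _

namespace Matrix

variable {𝕜 l n : Type*} [RCLike 𝕜] [Fintype l] [Fintype n] [DecidableEq n]

lemma l2_opNorm_le_sqrt_sum_sq_norm (A : Matrix l n 𝕜) :
    ‖A‖ ≤ √(∑ i, ∑ j, ‖A i j‖ ^ 2) := by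
  rw [l2_opNorm_def]
  refine ContinuousLinearMap.opNorm_le_bound _ (Real.sqrt_nonneg _) fun v => ?_
  refine (sq_le_sq₀ (norm_nonneg _) (by positivity)).1 ?_
  rw [mul_pow, Real.sq_sqrt (by positivity), EuclideanSpace.norm_sq_eq, EuclideanSpace.norm_sq_eq,
    Finset.sum_mul]
  exact Finset.sum_le_sum fun i _ => norm_sum_mul_sq_le (A i) v

lemma l2_opNorm_le_card_mul_of_norm_le (A : Matrix n n 𝕜) {c : ℝ} (hc : 0 ≤ c)
    (h : ∀ i j, ‖A i j‖ ≤ c) : ‖A‖ ≤ Fintype.card n * c :=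
  calc ‖A‖ ≤ √(∑ i, ∑ j, ‖A i j‖ ^ 2) := l2_opNorm_le_sqrt_sum_sq_norm A
    _ ≤ √(∑ _i : n, ∑ _j : n, c ^ 2) := by gcongr with i _ j _; exact h i j
    _ = Fintype.card n * c := by
      simp only [Finset.sum_const, Finset.card_univ, nsmul_eq_mul, ← mul_assoc, ← sq]
      rw [← mul_pow, Real.sqrt_sq (by positivity)]

end Matrix

lemma Complex.exp_I_mul_mul_star_exp_I_mul (a b : ℝ) :
    exp (I * a) * star (exp (I * b)) = exp (I * ↑(a - b)) := by
  rw [Complex.star_def, ← exp_conj, ← exp_add]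
  simp only [map_mul, conj_I, conj_ofReal, ofReal_sub]
  ring_nf

lemma Complex.norm_exp_I_mul_ofReal_sub_ofReal_le (θ : ℝ) {r : ℝ} (hr : 0 ≤ r) :
    ‖exp (I * θ) - r‖ ≤ 1 + r :=
  (norm_sub_le _ _).trans_eq <| by rw [norm_exp_I_mul_ofReal, norm_real, Real.norm_of_nonneg hr]

theorem summand_norm_bound_general
    {d m : ℕ} (hm : 0 < m)
    {Ω : Type*} [MeasurableSpace Ω] (μ : Measure Ω) [IsProbabilityMeasure μ]
    (κ η : ℝ) (hη : η ∈ Set.Ioo (0 : ℝ) 1)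
    (x : Fin m → EuclideanSpace ℝ (Fin d))
    (hsep : ∀ j j', j ≠ j' → κ ≤ ‖x j - x j'‖)
    (ω : Ω → EuclideanSpace ℝ (Fin d))
    (φ : EuclideanSpace ℝ (Fin d) → ℝ)
    (hφ : ∀ t, ∫ ϖ, Complex.exp (Complex.I * (⟪ω ϖ, t⟫ : ℝ)) ∂μ = (φ t : ℂ))
    (hφ_nonneg : ∀ t, 0 ≤ φ t)
    (hφ_le : ∀ t, κ ≤ ‖t‖ → φ t ≤ η / m)
    (W : Ω → Fin m → ℂ)
    (hW : ∀ ϖ j, W ϖ j = Complex.exp (Complex.I * (⟪ω ϖ, x j⟫ : ℝ)))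
    (M : Matrix (Fin m) (Fin m) ℂ)
    (hM : ∀ j k, M j k = ∫ ϖ, W ϖ j * star (W ϖ k) ∂μ) :
    ∀ᵐ ϖ ∂μ, ‖vecMulVec (W ϖ) (star (W ϖ)) - M‖ ≤ m + η := by
  have hφ_zero : φ 0 = 1 := by simpa using (hφ 0).symm
  have hY : ∀ ϖ j k, (vecMulVec (W ϖ) (star (W ϖ)) - M) j k =
      Complex.exp (Complex.I * (⟪ω ϖ, x j - x k⟫ : ℝ)) - φ (x j - x k) := by
    intro ϖ j k
    simp_rw [Matrix.sub_apply, vecMulVec_apply, Pi.star_apply, hM, hW,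
      Complex.exp_I_mul_mul_star_exp_I_mul, ← inner_sub_right, hφ]
  have hc : 0 ≤ 1 + η / m := add_nonneg zero_le_one (div_nonneg hη.1.le m.cast_nonneg)
  have hentry : ∀ ϖ j k, ‖(vecMulVec (W ϖ) (star (W ϖ)) - M) j k‖ ≤ 1 + η / m := by
    intro ϖ j k
    rw [hY]
    obtain rfl | hjk := eq_or_ne j k
    · simpa [hφ_zero] using hc
    refine (Complex.norm_exp_I_mul_ofReal_sub_ofReal_le _ (hφ_nonneg _)).trans ?_
    gcongr
    exact hφ_le _ (hsep j k hjk)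
  refine ae_of_all μ fun ϖ => ?_
  calc ‖vecMulVec (W ϖ) (star (W ϖ)) - M‖ ≤ Fintype.card (Fin m) * (1 + η / m) :=
        l2_opNorm_le_card_mul_of_norm_le _ hc (hentry ϖ)
    _ = m + η := by rw [Fintype.card_fin]; field_simp

/-- Bound on the summands in the proof of the concentration theorem: for
`κ`-separated points `x₁, …, x_m` and a random vector `ω` whose characteristic
function `φ` is real-valued, nonnegative and satisfies `φ(t) ≤ η/m` for
`‖t‖₂ ≥ κ`, the matrix `Y = W W* − E[W W*]` with `W_j = exp(i⟨ω, x_j⟩)`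
satisfies `‖Y‖₂ ≤ m + η` almost surely. -/
theorem summand_norm_bound
    {d m : ℕ} (hd : 0 < d) (hm : 0 < m)
    {Ω : Type*} [MeasurableSpace Ω] (μ : Measure Ω) [IsProbabilityMeasure μ]
    (κ η : ℝ) (hκ : 0 < κ) (hη : η ∈ Set.Ioo (0 : ℝ) 1)
    (x : Fin m → EuclideanSpace ℝ (Fin d))
    (hsep : ∀ j j', j ≠ j' → κ ≤ ‖x j - x j'‖)
    (ω : Ω → EuclideanSpace ℝ (Fin d)) (hmeas : Measurable ω)
    (φ : EuclideanSpace ℝ (Fin d) → ℝ)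
    (hφ : ∀ t, ∫ ϖ, Complex.exp (Complex.I * (⟪ω ϖ, t⟫ : ℝ)) ∂μ = (φ t : ℂ))
    (hφ_nonneg : ∀ t, 0 ≤ φ t)
    (hφ_le : ∀ t, κ ≤ ‖t‖ → φ t ≤ η / m)
    (W : Ω → Fin m → ℂ)
    (hW : ∀ ϖ j, W ϖ j = Complex.exp (Complex.I * (⟪ω ϖ, x j⟫ : ℝ)))
    (M : Matrix (Fin m) (Fin m) ℂ)
    (hM : ∀ j k, M j k = ∫ ϖ, W ϖ j * star (W ϖ k) ∂μ) :
    ∀ᵐ ϖ ∂μ, ‖vecMulVec (W ϖ) (star (W ϖ)) - M‖ ≤ m + η :=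
  summand_norm_bound_general hm μ κ η hη x hsep ω φ hφ hφ_nonneg hφ_le W hW M hM
end

section
/- Let d, m be positive integers, let κ > 0 and η ∈ (0,1), and let x₁,…,x_m ∈ ℝ^d satisfy ‖x_j − x_{j'}‖₂ ≥ κ for all j ≠ j'. Let ω be a random vector in ℝ^d whose characteristic function φ(t) = E[exp(i⟨ω, t⟩)] is real-valued, satisfies φ(t) ≥ 0 for all t, and satisfies φ(t) ≤ η/m for all t with ‖t‖₂ ≥ κ. Define W ∈ ℂ^m by W_j = exp(i⟨ω, x_j⟩). Then the matrix E[W W*] (expectation taken entrywise) satisfies ‖E[W W*]‖₂ ≤ 1 + η. -/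
open Matrix MeasureTheory
open scoped Matrix.Norms.L2Operator RealInnerProductSpace

/-! The entries of `E[W W*]` are the values `φ(x_j - x_k)`: they equal `φ 0 = 1` on the diagonal
and, by the separation of the points, lie in `[0, η/m]` off it. Hence `E[W W*] - 1` has all entries
bounded by `η/m`, and the operator norm of an `m × m` matrix is at most its Frobenius norm, hence
at most `m` times its largest entry. -/

namespace Matrix

lemma norm_sq_dotProduct_le {𝕜 n : Type*} [RCLike 𝕜] [Fintype n] (v w : n → 𝕜) :
    ‖v ⬝ᵥ w‖ ^ 2 ≤ (∑ j, ‖v j‖ ^ 2) * ∑ j, ‖w j‖ ^ 2 :=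
  calc ‖v ⬝ᵥ w‖ ^ 2 ≤ (∑ j, ‖v j‖ * ‖w j‖) ^ 2 := by
        gcongr
        exact (norm_sum_le _ _).trans_eq (by simp only [norm_mul])
    _ ≤ _ := Finset.sum_mul_sq_le_sq_mul_sq _ _ _

variable {𝕜 m n : Type*} [RCLike 𝕜] [Fintype m] [Fintype n] [DecidableEq n]

lemma l2_opNorm_le_sqrt_sum_norm_sq (A : Matrix m n 𝕜) :
    ‖A‖ ≤ √(∑ i, ∑ j, ‖A i j‖ ^ 2) := by
  rw [l2_opNorm_def]
  refine ContinuousLinearMap.opNorm_le_bound _ (by positivity) fun x ↦ ?_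
  refine (sq_le_sq₀ (by positivity) (by positivity)).mp ?_
  rw [mul_pow, Real.sq_sqrt (by positivity), EuclideanSpace.norm_sq_eq, EuclideanSpace.norm_sq_eq,
    Finset.sum_mul]
  exact Finset.sum_le_sum fun i _ ↦ norm_sq_dotProduct_le (A i) x.ofLp

lemma l2_opNorm_le_of_norm_entry_le {A : Matrix m n 𝕜} {c : ℝ} (hc : 0 ≤ c)
    (hA : ∀ i j, ‖A i j‖ ≤ c) : ‖A‖ ≤ √(Fintype.card m * Fintype.card n) * c := by
  refine (l2_opNorm_le_sqrt_sum_norm_sq A).trans ?_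
  rw [← Real.sqrt_sq hc, ← Real.sqrt_mul (by positivity)]
  gcongr
  calc ∑ i, ∑ j, ‖A i j‖ ^ 2 ≤ ∑ _i : m, ∑ _j : n, c ^ 2 := by gcongr with i _ j; exact hA i j
    _ = _ := by simp only [Finset.sum_const, Finset.card_univ, nsmul_eq_mul]; ring

lemma l2_opNorm_one_le : ‖(1 : Matrix n n 𝕜)‖ ≤ 1 := by
  rw [← diagonal_one, l2_opNorm_diagonal]
  exact (pi_norm_const_le _).trans norm_one.le

end Matrix

lemma Complex.exp_I_inner_sub {E : Type*} [NormedAddCommGroup E] [InnerProductSpace ℝ E]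
    (w a b : E) :
    Complex.exp (Complex.I * (⟪w, a - b⟫ : ℝ)) =
      Complex.exp (Complex.I * (⟪w, a⟫ : ℝ)) * star (Complex.exp (Complex.I * (⟪w, b⟫ : ℝ))) := by
  rw [Complex.star_def, ← Complex.exp_conj, map_mul, Complex.conj_I, Complex.conj_ofReal,
    ← Complex.exp_add, inner_sub_right]
  push_cast
  ring_nf

theorem second_moment_norm_bound_general
    {d m : ℕ}
    {Ω : Type*} [MeasurableSpace Ω] (μ : Measure Ω) [IsProbabilityMeasure μ]
    (κ η : ℝ) (hη : η ∈ Set.Ioo (0 : ℝ) 1)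
    (x : Fin m → EuclideanSpace ℝ (Fin d))
    (hsep : ∀ j j', j ≠ j' → κ ≤ ‖x j - x j'‖)
    (ω : Ω → EuclideanSpace ℝ (Fin d))
    (φ : EuclideanSpace ℝ (Fin d) → ℝ)
    (hφ : ∀ t, ∫ ϖ, Complex.exp (Complex.I * (⟪ω ϖ, t⟫ : ℝ)) ∂μ = (φ t : ℂ))
    (hφ_nonneg : ∀ t, 0 ≤ φ t)
    (hφ_le : ∀ t, κ ≤ ‖t‖ → φ t ≤ η / m)
    (W : Ω → Fin m → ℂ)
    (hW : ∀ ϖ j, W ϖ j = Complex.exp (Complex.I * (⟪ω ϖ, x j⟫ : ℝ)))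
    (M : Matrix (Fin m) (Fin m) ℂ)
    (hM : ∀ j k, M j k = ∫ ϖ, W ϖ j * star (W ϖ k) ∂μ) :
    ‖M‖ ≤ 1 + η := by
  have hM_eq : ∀ j k, M j k = φ (x j - x k) := fun j k ↦ by
    simp only [hM, hW, ← Complex.exp_I_inner_sub, hφ]
  have hφ_zero : φ 0 = 1 := by
    simpa using (hφ 0).symm
  have hη_div : 0 ≤ η / m := div_nonneg hη.1.le m.cast_nonneg
  have hM_sub_one : ∀ j k, ‖(M - 1) j k‖ ≤ η / m := fun j k ↦ by
    rcases eq_or_ne j k with rfl | hjk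
    · simpa [hM_eq, hφ_zero] using hη_div
    · simpa [hM_eq, one_apply_ne hjk, abs_of_nonneg (hφ_nonneg _)] using hφ_le _ (hsep j k hjk)
  calc ‖M‖ ≤ ‖(1 : Matrix (Fin m) (Fin m) ℂ)‖ + ‖M - 1‖ := norm_le_insert' M 1
    _ ≤ 1 + √(m * m) * (η / m) := by
        gcongr
        · exact l2_opNorm_one_le
        · simpa using l2_opNorm_le_of_norm_entry_le hη_div hM_sub_one
    _ ≤ 1 + η := by
        rw [Real.sqrt_mul_self m.cast_nonneg]
        gcongr
        rw [mul_div_assoc']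
        exact div_le_of_le_mul₀ m.cast_nonneg hη.1.le (mul_comm _ _).le

/-- Second-moment norm bound in the proof of the concentration theorem: for
`κ`-separated points `x₁, …, x_m` and a random vector `ω` whose characteristic
function `φ` is real-valued, nonnegative and satisfies `φ(t) ≤ η/m` for
`‖t‖₂ ≥ κ`, the entrywise expectation `E[W W*]` with `W_j = exp(i⟨ω, x_j⟩)`
satisfies `‖E[W W*]‖₂ ≤ 1 + η`. -/
theorem second_moment_norm_bound
    {d m : ℕ} (hd : 0 < d) (hm : 0 < m)
    {Ω : Type*} [MeasurableSpace Ω] (μ : Measure Ω) [IsProbabilityMeasure μ]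
    (κ η : ℝ) (hκ : 0 < κ) (hη : η ∈ Set.Ioo (0 : ℝ) 1)
    (x : Fin m → EuclideanSpace ℝ (Fin d))
    (hsep : ∀ j j', j ≠ j' → κ ≤ ‖x j - x j'‖)
    (ω : Ω → EuclideanSpace ℝ (Fin d)) (hmeas : Measurable ω)
    (φ : EuclideanSpace ℝ (Fin d) → ℝ)
    (hφ : ∀ t, ∫ ϖ, Complex.exp (Complex.I * (⟪ω ϖ, t⟫ : ℝ)) ∂μ = (φ t : ℂ))
    (hφ_nonneg : ∀ t, 0 ≤ φ t)
    (hφ_le : ∀ t, κ ≤ ‖t‖ → φ t ≤ η / m)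
    (W : Ω → Fin m → ℂ)
    (hW : ∀ ϖ j, W ϖ j = Complex.exp (Complex.I * (⟪ω ϖ, x j⟫ : ℝ)))
    (M : Matrix (Fin m) (Fin m) ℂ)
    (hM : ∀ j k, M j k = ∫ ϖ, W ϖ j * star (W ϖ k) ∂μ) :
    ‖M‖ ≤ 1 + η :=
  second_moment_norm_bound_general μ κ η hη x hsep ω φ hφ hφ_nonneg hφ_le W hW M hM
end
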